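/- Every simple graph on n vertices that is not k-connected has at most C(n-2,2) + 2k - 1 edges, where C(m,2) = m(m-1)/2, provided every vertex has degree at least k and n ≥ k+3. -/

import Mathlib

def KConnected {V : Type*} [Fintype V] (G : SimpleGraph V) (k : ℕ) : Prop :=
  k < Fintype.card V ∧
    ∀ s : Finset V, s.card < k → (G.induce ((s : Set V)ᶜ)).Connected

/-!
A cut `S` with `t = |S| < k` splits the remaining vertices into parts `A`, `B` with no edge
between them. A vertex of `A` has all its neighbours in `A ∪ S`, so its degree is below
`a + t`, and the minimum degree forces `a + t ≥ k + 1`; likewise for `B`. Summing degrees gives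
`2e + n ≤ a (a + t) + t n + b (b + t)`, and under these constraints the right-hand side is
`(n - 2)(n - 3) + 4k - 2 + n` minus the slack `2 (a - 2)(b - 2) + 4 (k - 1 - t) ≥ 0`.
-/

open Finset

lemma edge_count_le_of_separation_sizes {a t b k e : ℕ} (ha : k + 1 ≤ a + t) (hb : k + 1 ≤ b + t)
    (ht : t < k) (he : 2 * e + (a + t + b) ≤ a * (a + t) + t * (a + t + b) + b * (b + t)) :
    e ≤ (a + t + b - 2) * (a + t + b - 3) / 2 + 2 * k - 1 := by
  obtain ⟨m, hm⟩ : ∃ m, a + t + b = m + 3 := ⟨a + t + b - 3, by omega⟩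
  obtain ⟨r, hr⟩ := Nat.even_mul_pred_self (m + 1)
  rw [hm, show m + 3 - 2 = m + 1 by omega, show m + 3 - 3 = m + 1 - 1 by omega, hr]
  have key : 2 * e + 2 ≤ (m + 1) * (m + 1 - 1) + 4 * k := by
    simp only [Nat.add_sub_cancel]
    nlinarith [Nat.mul_le_mul (show 2 ≤ a by omega) (show 2 ≤ b by omega)]
  omega

namespace SimpleGraph

variable {V : Type*} {G : SimpleGraph V} {S A : Finset V}

def Separates (G : SimpleGraph V) (S A : Finset V) : Prop :=
  ∀ u ∈ A, ∀ w, G.Adj u w → w ∈ A ∨ w ∈ S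

section Fintype

variable [Fintype V] [DecidableEq V]

lemma Separates.compl (h : G.Separates S A) : G.Separates S (A ∪ S)ᶜ := by
  intro u hu w huw
  simp only [mem_compl, mem_union, not_or] at hu ⊢
  by_cases hwA : w ∈ A
  · exact absurd (h w hwA u huw.symm) (not_or.2 hu)
  · tauto

lemma Separates.degree_lt [DecidableRel G.Adj] (h : G.Separates S A) {v : V} (hv : v ∈ A) :
    G.degree v < #A + #S :=
  calc G.degree v = #(G.neighborFinset v) := (G.card_neighborFinset_eq_degree v).symm
    _ < #(insert v (G.neighborFinset v)) :=
        card_lt_card (ssubset_insert (G.notMem_neighborFinset_self v))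
    _ ≤ #(A ∪ S) := by
        refine card_le_card (insert_subset (mem_union_left _ hv) fun w hw => ?_)
        exact mem_union.2 (h v hv w ((G.mem_neighborFinset v w).1 hw))
    _ ≤ #A + #S := card_union_le _ _

lemma Separates.two_mul_card_edgeFinset_add_card_le [DecidableRel G.Adj] (h : G.Separates S A)
    (hAS : Disjoint A S) :
    2 * #G.edgeFinset + Fintype.card V ≤
      #A * (#A + #S) + #S * Fintype.card V + #(A ∪ S)ᶜ * (#(A ∪ S)ᶜ + #S) :=
  calc 2 * #G.edgeFinset + Fintype.card V = ∑ v, (G.degree v + 1) := by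
        rw [sum_add_distrib, sum_degrees_eq_twice_card_edges, sum_const, card_univ, smul_eq_mul,
          mul_one]
    _ = ∑ v ∈ A, (G.degree v + 1) + ∑ v ∈ S, (G.degree v + 1) +
          ∑ v ∈ (A ∪ S)ᶜ, (G.degree v + 1) := by
        rw [← sum_union hAS, sum_add_sum_compl]
    _ ≤ #A * (#A + #S) + #S * Fintype.card V + #(A ∪ S)ᶜ * (#(A ∪ S)ᶜ + #S) := by
        simp only [← smul_eq_mul]
        gcongr
        · exact sum_le_card_nsmul _ _ _ fun v hv => h.degree_lt hv
        · exact sum_le_card_nsmul _ _ _ fun v _ => G.degree_lt_card_verts v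
        · exact sum_le_card_nsmul _ _ _ fun v hv => h.compl.degree_lt hv

lemma exists_separates_of_not_kConnected {k : ℕ} (hk : k < Fintype.card V)
    (h : ¬ KConnected G k) :
    ∃ S A : Finset V, #S < k ∧ G.Separates S A ∧ Disjoint A S ∧ A.Nonempty ∧ (A ∪ S)ᶜ.Nonempty := by
  classical
  obtain ⟨S, hS, hdisc⟩ : ∃ S : Finset V, #S < k ∧ ¬ (G.induce (S : Set V)ᶜ).Connected := by
    simpa [KConnected, hk] using h
  have : Nonempty ((S : Set V)ᶜ : Set V) := by
    obtain ⟨v, hv⟩ : Sᶜ.Nonempty := by rw [← card_pos, card_compl]; omega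
    exact ⟨v, by simpa using hv⟩
  obtain ⟨x, y, hxy⟩ : ∃ x y, ¬ (G.induce (S : Set V)ᶜ).Reachable x y := by
    simpa [connected_iff, Preconnected, this] using hdisc
  refine ⟨S, ({v | ∃ hv : v ∉ S, (G.induce (S : Set V)ᶜ).Reachable x ⟨v, hv⟩} : Finset V), hS,
    ?_, ?_, ?_, ?_⟩
  · intro u hu w huw
    simp only [mem_filter, mem_univ, true_and] at hu ⊢
    obtain ⟨huS, hxu⟩ := hu
    by_cases hwS : w ∈ S
    · exact Or.inr hwS
    · exact Or.inl ⟨hwS, hxu.trans (Adj.reachable (by simpa using huw))⟩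
  · exact Finset.disjoint_left.2 fun v hv => by simp only [mem_filter] at hv; exact hv.2.1
  · exact ⟨x, by simp only [mem_filter, mem_univ, true_and]; exact ⟨x.2, .rfl⟩⟩
  · refine ⟨y, ?_⟩
    simp only [mem_compl, mem_union, mem_filter, mem_univ, true_and, not_or]
    exact ⟨fun ⟨_, hxy'⟩ => hxy hxy', y.2⟩

end Fintype

end SimpleGraph

theorem stmt12_general {V : Type*} [Fintype V] (n k : ℕ) (hcard : Fintype.card V = n)
    (G : SimpleGraph V) (hmin : ∀ v, k ≤ (G.neighborSet v).ncard)
    (hnotk : ¬ KConnected G k) :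
    G.edgeSet.ncard ≤ (n - 2) * (n - 3) / 2 + 2 * k - 1 := by
  classical
  have hdeg (v : V) : k ≤ G.degree v := by
    simpa [Set.ncard_eq_toFinset_card', ← G.card_neighborSet_eq_degree] using hmin v
  rcases isEmpty_or_nonempty V with hV | ⟨⟨v⟩⟩
  · simp [Set.eq_empty_of_isEmpty G.edgeSet]
  obtain ⟨S, A, hS, hsep, hAS, ⟨a, ha⟩, ⟨b, hb⟩⟩ :=
    G.exists_separates_of_not_kConnected ((hdeg v).trans_lt (G.degree_lt_card_verts v)) hnotk
  have hsize : #A + #S + #(A ∪ S)ᶜ = n := by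
    rw [← card_union_of_disjoint hAS, card_add_card_compl, hcard]
  have hedges := hsep.two_mul_card_edgeFinset_add_card_le hAS
  rw [hcard, ← hsize] at hedges
  rw [← G.coe_edgeFinset, Set.ncard_coe_finset, ← hsize]
  exact edge_count_le_of_separation_sizes ((hdeg a).trans_lt (hsep.degree_lt ha))
    ((hdeg b).trans_lt (hsep.compl.degree_lt hb)) hS hedges

theorem stmt12 {V : Type*} [Fintype V] (n k : ℕ) (hcard : Fintype.card V = n)
    (hn : k + 3 ≤ n) (G : SimpleGraph V) (hmin : ∀ v, k ≤ (G.neighborSet v).ncard)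
    (hnotk : ¬ KConnected G k) :
    G.edgeSet.ncard ≤ (n - 2) * (n - 3) / 2 + 2 * k - 1 :=
  stmt12_general n k hcard G hmin hnotk
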